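/- arXiv:1502.04970 — 8 statements merged into one kernel-verified Lean document; each statement's English description precedes it below -/
import Mathlib

section
/- Let R = ⊕_{n∈ℤ} R_n be a ℤ-graded commutative ring and M = ⊕_{n∈ℤ} M_n a graded R-module. Let x ∈ M have decomposition x = x_{i_1} + ⋯ + x_{i_k} into its nonzero homogeneous components x_{i_j} ∈ M_{i_j}. Then the radical of the annihilator of x equals the intersection of the radicals of the annihilators of its components: √(Ann_R(x)) = ⋂_{j=1}^k √(Ann_R(x_{i_j})). -/
open DirectSum
set_option synthInstance.maxHeartbeats 1000000
set_option maxHeartbeats 1000000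

section Aux

variable {R M : Type*} [CommRing R] [AddCommGroup M] [Module R M]
  (𝒜 : ℤ → AddSubgroup R) (ℳ : ℤ → AddSubgroup M)
  [GradedRing 𝒜] [DirectSum.Decomposition ℳ] [SetLike.GradedSMul 𝒜 ℳ]

/-- The `t`-th component map, as an `AddMonoidHom`. -/
noncomputable def gradedComp (t : ℤ) : M →+ M :=
  ((ℳ t).subtype.comp (DFinsupp.evalAddMonoidHom t)).comp
    (decomposeAddEquiv ℳ).toAddMonoidHom

lemma gradedComp_apply (t : ℤ) (x : M) :
    gradedComp ℳ t x = (decompose ℳ x t : M) := rfl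

lemma aux_eq_zero (x : M) (h : ∀ n, (decompose ℳ x n : M) = 0) : x = 0 := by
  apply (decomposeAddEquiv ℳ).injective
  rw [map_zero]
  exact DFinsupp.ext fun n => Subtype.ext (h n)

lemma comp_smul_homog {r : R} {d : ℤ} (hr : r ∈ 𝒜 d) (x : M) (n : ℤ) :
    (decompose ℳ (r • x) (d + n) : M) = r • (decompose ℳ x n : M) := by
  induction x using DirectSum.Decomposition.inductionOn ℳ with
  | zero => simp
  | @homogeneous i m =>
    have hm : (m : M) ∈ ℳ i := m.2
    have hrm : r • (m : M) ∈ ℳ (d + i) := SetLike.GradedSMul.smul_mem hr hm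
    by_cases h : n = i
    · subst h
      rw [decompose_of_mem_same ℳ hrm, decompose_of_mem_same ℳ hm]
    · rw [decompose_of_mem_ne ℳ hm (Ne.symm h), smul_zero,
        decompose_of_mem_ne ℳ hrm (by omega)]
  | add x y hx hy =>
    rw [smul_add, ← gradedComp_apply, map_add, gradedComp_apply, gradedComp_apply,
      hx, hy, ← gradedComp_apply ℳ n (x+y), map_add, gradedComp_apply, gradedComp_apply,
      smul_add]

lemma comp_smul_homog' {r : R} {d : ℤ} (hr : r ∈ 𝒜 d) (x : M) (t : ℤ) :
    (decompose ℳ (r • x) t : M) = r • (decompose ℳ x (t - d) : M) := by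
  have h := comp_smul_homog 𝒜 ℳ hr x (t - d)
  rwa [show d + (t - d) = t by ring] at h

lemma comp_smul (a : R) (F : Finset ℤ) (hF : ∀ e ∉ F, (decompose 𝒜 a e : R) = 0)
    (x : M) (t : ℤ) :
    (decompose ℳ (a • x) t : M)
      = ∑ e ∈ F, (decompose 𝒜 a e : R) • (decompose ℳ x (t - e) : M) := by
  classical
  have ha : a = ∑ e ∈ F, (decompose 𝒜 a e : R) := by
    conv_lhs => rw [← DirectSum.sum_support_decompose 𝒜 a]
    apply Finset.sum_subset
    · intro i hi
      by_contra h
      exact (DFinsupp.mem_support_iff.mp hi) (Subtype.ext (hF i h))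
    · intro i _ hi
      rw [DFinsupp.notMem_support_iff.mp hi, ZeroMemClass.coe_zero]
  calc (decompose ℳ (a • x) t : M)
      = (decompose ℳ ((∑ e ∈ F, (decompose 𝒜 a e : R)) • x) t : M) := by rw [← ha]
    _ = ∑ e ∈ F, (decompose ℳ ((decompose 𝒜 a e : R) • x) t : M) := by
        rw [Finset.sum_smul, ← gradedComp_apply, map_sum]
        rfl
    _ = ∑ e ∈ F, (decompose 𝒜 a e : R) • (decompose ℳ x (t - e) : M) :=
        Finset.sum_congr rfl fun e _ =>
          comp_smul_homog' 𝒜 ℳ (SetLike.coe_mem (decompose 𝒜 a e)) x t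


lemma top_pow_smul : ∀ (k : ℕ) (t : Finset ℤ) (x : M), t.card ≤ k →
    (∀ n ∉ t, (decompose ℳ x n : M) = 0) →
    ∀ (a : R) (d : ℤ), (∀ e, d < e → (decompose 𝒜 a e : R) = 0) → a • x = 0 →
    ∃ m, (decompose 𝒜 a d : R) ^ m • x = 0 := by
  intro k
  induction k with
  | zero =>
    intro t x hcard hx a d _ _
    have ht : t = ∅ := Finset.card_eq_zero.mp (Nat.le_zero.mp hcard)
    have hx0 : x = 0 := aux_eq_zero ℳ x fun n => hx n (by simp [ht])
    exact ⟨0, by simp [hx0]⟩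
  | succ k ih =>
    intro t x hcard hx a d ha hax
    classical
    by_cases hne : t.Nonempty
    · set n := t.max' hne with hn
      have hxtop : ∀ e, n < e → (decompose ℳ x e : M) = 0 := fun e he =>
        hx e (fun hmem => absurd (t.le_max' e hmem) (not_le.mpr he))
      set F : Finset ℤ := insert d (decompose 𝒜 a).support with hFdef
      have hF : ∀ e ∉ F, (decompose 𝒜 a e : R) = 0 := by
        intro e he
        have h1 : e ∉ (decompose 𝒜 a).support := fun h => he (Finset.mem_insert_of_mem h)
        rw [DFinsupp.notMem_support_iff.mp h1, ZeroMemClass.coe_zero]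
      have h0 : (0 : M)
          = ∑ e ∈ F, (decompose 𝒜 a e : R) • (decompose ℳ x (d + n - e) : M) := by
        have := comp_smul 𝒜 ℳ a F hF x (d + n)
        rw [hax] at this
        simp only [decompose_zero, DirectSum.zero_apply, ZeroMemClass.coe_zero] at this
        exact this
      have key : (decompose 𝒜 a d : R) • (decompose ℳ x n : M) = 0 := by
        rw [Finset.sum_eq_single d ?ha ?hb] at h0
        · rw [show d + n - d = n by ring] at h0
          exact h0.symm
        case ha =>
          intro g _ hgd
          rcases lt_or_gt_of_ne hgd with h | h
          · rw [hxtop (d + n - g) (by omega), smul_zero]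
          · rw [ha g h, zero_smul]
        case hb =>
          intro h
          exact absurd (Finset.mem_insert_self d _) h
      set b : R := (decompose 𝒜 a d : R) with hb
      have hy : ∀ m, m ∉ (t.erase n).image (· + d) → (decompose ℳ (b • x) m : M) = 0 := by
        intro m hm
        rw [comp_smul_homog' 𝒜 ℳ (SetLike.coe_mem (decompose 𝒜 a d)) x m]
        by_cases h1 : m - d = n
        · rw [h1, key]
        · have h2 : m - d ∉ t := fun h =>
            hm (Finset.mem_image.mpr ⟨m - d, Finset.mem_erase.mpr ⟨h1, h⟩, by ring⟩)
          rw [hx _ h2, smul_zero]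
      have hcard' : ((t.erase n).image (· + d)).card ≤ k := by
        refine le_trans Finset.card_image_le ?_
        rw [Finset.card_erase_of_mem (t.max'_mem hne)]
        omega
      have hay : a • (b • x) = 0 := by
        rw [smul_smul, mul_comm, ← smul_smul, hax, smul_zero]
      obtain ⟨m, hm⟩ := ih _ (b • x) hcard' hy a d ha hay
      exact ⟨m + 1, by rw [pow_succ, mul_smul]; exact hm⟩
    · have ht : t = ∅ := Finset.not_nonempty_iff_eq_empty.mp hne
      have hx0 : x = 0 := aux_eq_zero ℳ x fun n => hx n (by simp [ht])
      exact ⟨0, by simp [hx0]⟩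


lemma mul_comps (a b : R) (d e : ℤ)
    (ha : ∀ f, d < f → (decompose 𝒜 a f : R) = 0)
    (hb : ∀ f, e < f → (decompose 𝒜 b f : R) = 0) :
    (∀ f, d + e < f → (decompose 𝒜 (a * b) f : R) = 0) ∧
      (decompose 𝒜 (a * b) (d + e) : R)
        = (decompose 𝒜 a d : R) * (decompose 𝒜 b e : R) := by
  classical
  set F : Finset ℤ := insert d (decompose 𝒜 a).support with hFdef
  have hF : ∀ f ∉ F, (decompose 𝒜 a f : R) = 0 := by
    intro f hf
    have h1 : f ∉ (decompose 𝒜 a).support := fun h => hf (Finset.mem_insert_of_mem h)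
    rw [DFinsupp.notMem_support_iff.mp h1, ZeroMemClass.coe_zero]
  have hcomp : ∀ t, (decompose 𝒜 (a * b) t : R)
      = ∑ f ∈ F, (decompose 𝒜 a f : R) * (decompose 𝒜 b (t - f) : R) := by
    intro t
    have := comp_smul 𝒜 𝒜 a F hF b t
    simpa [smul_eq_mul] using this
  constructor
  · intro f hf
    rw [hcomp f]
    apply Finset.sum_eq_zero
    intro g hg
    rcases le_or_gt g d with h | h
    · rw [hb (f - g) (by omega), mul_zero]
    · rw [ha g h, zero_mul]
  · rw [hcomp (d + e), Finset.sum_eq_single d ?_ ?_]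
    · rw [show d + e - d = e by ring]
    · intro g _ hgd
      rcases lt_or_gt_of_ne hgd with h | h
      · rw [hb (d + e - g) (by omega), mul_zero]
      · rw [ha g h, zero_mul]
    · intro h; exact absurd (Finset.mem_insert_self d _) h

lemma pow_comps (a : R) (d : ℤ) (ha : ∀ e, d < e → (decompose 𝒜 a e : R) = 0) :
    ∀ m : ℕ, (∀ e, (m : ℤ) * d < e → (decompose 𝒜 (a ^ m) e : R) = 0) ∧
      (decompose 𝒜 (a ^ m) ((m : ℤ) * d) : R) = (decompose 𝒜 a d : R) ^ m := by
  intro m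
  induction m with
  | zero =>
    constructor
    · intro e he
      have he' : (0 : ℤ) < e := by simpa using he
      rw [pow_zero]
      exact decompose_of_mem_ne 𝒜 (SetLike.one_mem_graded 𝒜) (by omega)
    · rw [pow_zero, pow_zero, show ((0 : ℕ) : ℤ) * d = 0 by simp]
      exact decompose_of_mem_same 𝒜 (SetLike.one_mem_graded 𝒜)
  | succ m ih =>
    have h := mul_comps 𝒜 (a ^ m) a ((m : ℤ) * d) d ih.1 ha
    have hcast : ((m + 1 : ℕ) : ℤ) * d = (m : ℤ) * d + d := by push_cast; ring
    constructor
    · intro e he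
      rw [pow_succ]
      exact h.1 e (by rw [hcast] at he; exact he)
    · rw [pow_succ, hcast, h.2, ih.2, pow_succ]

include ℳ in
lemma top_mem_radical (x : M) (a : R) (d : ℤ)
    (ha : ∀ e, d < e → (decompose 𝒜 a e : R) = 0)
    (h : a ∈ (Ideal.torsionOf R M x).radical) :
    (decompose 𝒜 a d : R) ∈ (Ideal.torsionOf R M x).radical := by
  classical
  obtain ⟨m, hm⟩ := Ideal.mem_radical_iff.mp h
  have hm1 : a ^ (m + 1) ∈ Ideal.torsionOf R M x := by
    rw [pow_succ]; exact Ideal.mul_mem_right a _ hm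
  have hax : a ^ (m + 1) • x = 0 := (Ideal.mem_torsionOf_iff x _).mp hm1
  obtain ⟨hb1, hb2⟩ := pow_comps 𝒜 a d ha (m + 1)
  obtain ⟨j, hj⟩ := top_pow_smul 𝒜 ℳ ((decompose ℳ x).support.card)
    ((decompose ℳ x).support) x le_rfl
    (fun n hn => by rw [DFinsupp.notMem_support_iff.mp hn, ZeroMemClass.coe_zero])
    (a ^ (m + 1)) (((m + 1 : ℕ) : ℤ) * d) hb1 hax
  rw [hb2, ← pow_mul] at hj
  exact Ideal.mem_radical_iff.mpr ⟨(m + 1) * j, (Ideal.mem_torsionOf_iff x _).mpr hj⟩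

include ℳ in
lemma comps_mem_radical (x : M) :
    ∀ (k : ℕ) (t : Finset ℤ) (a : R), t.card ≤ k →
      (∀ e ∉ t, (decompose 𝒜 a e : R) = 0) →
      a ∈ (Ideal.torsionOf R M x).radical →
      ∀ d, (decompose 𝒜 a d : R) ∈ (Ideal.torsionOf R M x).radical := by
  classical
  intro k
  induction k with
  | zero =>
    intro t a hcard ht _ d
    have hsupp : t = ∅ := Finset.card_eq_zero.mp (Nat.le_zero.mp hcard)
    rw [ht d (by simp [hsupp])]; exact Ideal.zero_mem _
  | succ k ih =>
    intro t a hcard ht ha d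
    by_cases hne : t.Nonempty
    · set d0 := t.max' hne with hd0
      have hatop : ∀ e, d0 < e → (decompose 𝒜 a e : R) = 0 := fun e he =>
        ht e (fun h => absurd (Finset.le_max' _ e h) (not_le.mpr he))
      have htop := top_mem_radical 𝒜 ℳ x a d0 hatop ha
      set a' := a - (decompose 𝒜 a d0 : R) with ha'
      have ha'mem : a' ∈ (Ideal.torsionOf R M x).radical := Ideal.sub_mem _ ha htop
      have hcomp : ∀ e, (decompose 𝒜 a' e : R)
          = if e = d0 then 0 else (decompose 𝒜 a e : R) := by
        intro e
        have hsub : (decompose 𝒜 a' e : R) = (decompose 𝒜 a e : R)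
            - (decompose 𝒜 ((decompose 𝒜 a d0 : R)) e : R) := by
          rw [ha', ← gradedComp_apply, map_sub, gradedComp_apply, gradedComp_apply]
        rw [hsub]
        by_cases h : e = d0
        · subst h; rw [decompose_of_mem_same 𝒜 (SetLike.coe_mem _), if_pos rfl, sub_self]
        · rw [decompose_of_mem_ne 𝒜 (SetLike.coe_mem _) (Ne.symm h), sub_zero, if_neg h]
      have ht' : ∀ e ∉ t.erase d0, (decompose 𝒜 a' e : R) = 0 := by
        intro e he
        rw [hcomp e]
        by_cases h : e = d0
        · rw [if_pos h]
        · rw [if_neg h]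
          exact ht e fun hmem => he (Finset.mem_erase.mpr ⟨h, hmem⟩)
      have hcard' : (t.erase d0).card ≤ k := by
        rw [Finset.card_erase_of_mem (t.max'_mem hne)]
        omega
      have hall := ih (t.erase d0) a' hcard' ht' ha'mem
      by_cases h : d = d0
      · subst h; exact htop
      · have h2 := hall d
        rw [hcomp d, if_neg h] at h2
        exact h2
    · have hsupp : t = ∅ := Finset.not_nonempty_iff_eq_empty.mp hne
      rw [ht d (by simp [hsupp])]; exact Ideal.zero_mem _

lemma homog_mem_radical_comp (x : M) {b : R} {d : ℤ} (hb : b ∈ 𝒜 d)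
    (h : b ∈ (Ideal.torsionOf R M x).radical) (n : ℤ) :
    b ∈ (Ideal.torsionOf R M (decompose ℳ x n : M)).radical := by
  obtain ⟨j, hj⟩ := Ideal.mem_radical_iff.mp h
  have hbx : b ^ j • x = 0 := (Ideal.mem_torsionOf_iff x _).mp hj
  have hbj : b ^ j ∈ 𝒜 (j • d) := SetLike.pow_mem_graded j hb
  have hkey := comp_smul_homog 𝒜 ℳ hbj x n
  rw [hbx] at hkey
  refine Ideal.mem_radical_iff.mpr ⟨j, (Ideal.mem_torsionOf_iff _ _).mpr ?_⟩
  rw [← hkey]; simp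

end Aux

/-- Let `R` be a `ℤ`-graded commutative ring and `M` a graded `R`-module.  If `x ∈ M` has
homogeneous components `decompose ℳ x n`, nonzero exactly for `n` in the finite set `s`, then
`√(Ann_R x) = ⋂_{n ∈ s} √(Ann_R (xₙ))`. -/
theorem radical_torsionOf_eq_iInf_radical_torsionOf_components
    {R M : Type*} [CommRing R] [AddCommGroup M] [Module R M]
    (𝒜 : ℤ → AddSubgroup R) (ℳ : ℤ → AddSubgroup M)
    [GradedRing 𝒜] [DirectSum.Decomposition ℳ] [SetLike.GradedSMul 𝒜 ℳ]
    (x : M) (s : Finset ℤ)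
    (hs : ∀ n : ℤ, (DirectSum.decompose ℳ x n : M) ≠ 0 ↔ n ∈ s) :
    (Ideal.torsionOf R M x).radical =
      ⨅ n ∈ s, (Ideal.torsionOf R M (DirectSum.decompose ℳ x n : M)).radical := by
  classical
  apply le_antisymm
  · refine le_iInf₂ fun n hn => ?_
    intro r hr
    have hcomps := comps_mem_radical 𝒜 ℳ x ((decompose 𝒜 r).support.card)
      ((decompose 𝒜 r).support) r le_rfl
      (fun e he => by rw [DFinsupp.notMem_support_iff.mp he, ZeroMemClass.coe_zero]) hr
    have hmem : ∀ d ∈ (decompose 𝒜 r).support,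
        (decompose 𝒜 r d : R) ∈ (Ideal.torsionOf R M (decompose ℳ x n : M)).radical :=
      fun d _ => homog_mem_radical_comp 𝒜 ℳ x (SetLike.coe_mem _) (hcomps d) n
    have hr_eq := DirectSum.sum_support_decompose 𝒜 r
    rw [← hr_eq]
    exact Ideal.sum_mem _ hmem
  · intro r hr
    simp only [Ideal.mem_iInf] at hr
    have hall : ∀ n : ℤ, ∃ k : ℕ, r ^ k • (decompose ℳ x n : M) = 0 := by
      intro n
      by_cases hn : n ∈ s
      · obtain ⟨k, hk⟩ := Ideal.mem_radical_iff.mp (hr n hn)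
        exact ⟨k, (Ideal.mem_torsionOf_iff _ _).mp hk⟩
      · refine ⟨0, ?_⟩
        have h0 : (decompose ℳ x n : M) = 0 := by
          by_contra h; exact hn ((hs n).mp h)
        rw [h0, smul_zero]
    choose f hf using hall
    set N := s.sup f with hN
    have hx_eq : x = ∑ n ∈ s, (decompose ℳ x n : M) := by
      conv_lhs => rw [← DirectSum.sum_support_decompose ℳ x]
      apply Finset.sum_subset
      · intro n hn
        exact (hs n).mp fun h => DFinsupp.mem_support_iff.mp hn (Subtype.ext h)
      · intro n _ hn
        rw [DFinsupp.notMem_support_iff.mp hn, ZeroMemClass.coe_zero]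
    refine Ideal.mem_radical_iff.mpr ⟨N, (Ideal.mem_torsionOf_iff _ _).mpr ?_⟩
    rw [hx_eq, Finset.smul_sum]
    apply Finset.sum_eq_zero
    intro n hn
    have hle : f n ≤ N := Finset.le_sup hn
    calc r ^ N • (decompose ℳ x n : M)
        = (r ^ (N - f n) * r ^ f n) • (decompose ℳ x n : M) := by
          rw [← pow_add, Nat.sub_add_cancel hle]
      _ = r ^ (N - f n) • (r ^ f n • (decompose ℳ x n : M)) := by rw [mul_smul]
      _ = 0 := by rw [hf n, smul_zero]
end

section
/- Let R = ⊕_{n∈ℤ} R_n be a ℤ-graded commutative ring and M = ⊕_{n∈ℤ} M_n a graded R-module. Let x = x_{i_1} + ⋯ + x_{i_k} with x_{i_j} ∈ M_{i_j} and i_1 < i_2 < ⋯ < i_k, and let y = y_{l_1} + ⋯ + y_{l_m} with y_{l_j} ∈ R_{l_j} and l_1 < l_2 < ⋯ < l_m. If y x = 0, then the lowest-degree component of y kills the components of x up to powers: y_{l_1}^{j} · x_{i_j} = 0 for every j = 1, …, k. -/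
set_option maxHeartbeats 1000000
set_option synthInstance.maxHeartbeats 1000000

/-- Let `R` be a `ℤ`-graded commutative ring and `M` a graded `R`-module.  Write
`x = x_{i₁} + ⋯ + x_{i_k}` with `x_{i_j} ∈ M_{i_j}`, `i₁ < ⋯ < i_k`, and
`y = y_{l₁} + ⋯ + y_{l_m}` with `y_{l_j} ∈ R_{l_j}`, `l₁ < ⋯ < l_m` (here `m ≥ 1` is encoded
by indexing over `Fin (m + 1)`).  If `y • x = 0` then `y_{l₁} ^ j • x_{i_j} = 0` for every
`j = 1, …, k` (with `Fin k` zero-indexed, so the exponent is `j + 1`). -/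
theorem lowest_component_pow_smul_component_eq_zero
    {R M : Type*} [CommRing R] [AddCommGroup M] [Module R M]
    (𝒜 : ℤ → AddSubgroup R) (ℳ : ℤ → AddSubgroup M)
    [GradedRing 𝒜] [DirectSum.Decomposition ℳ] [SetLike.GradedSMul 𝒜 ℳ]
    (k m : ℕ) (i : Fin k → ℤ) (l : Fin (m + 1) → ℤ)
    (hi : StrictMono i) (hl : StrictMono l)
    (xc : Fin k → M) (yc : Fin (m + 1) → R)
    (hxc : ∀ j, xc j ∈ ℳ (i j)) (hyc : ∀ j, yc j ∈ 𝒜 (l j))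
    (h : (∑ j, yc j) • (∑ j, xc j) = 0) :
    ∀ j : Fin k, (yc 0) ^ ((j : ℕ) + 1) • xc j = 0 := by
  have main : ∀ j : Fin k,
      (∀ b : Fin k, (b : ℕ) < (j : ℕ) → (yc 0) ^ ((b : ℕ) + 1) • xc b = 0) →
      (yc 0) ^ ((j : ℕ) + 1) • xc j = 0 := by
    intro j ih
    set z := yc 0 with hzdef
    set e : ℤ := ((j : ℕ) • l 0 + l 0) + i j with he
    have hterm : ∀ (a : Fin (m+1)) (b : Fin k),
        (z ^ (j : ℕ) * yc a) • xc b ∈ ℳ (((j : ℕ) • l 0 + l a) + i b) := fun a b =>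
      SetLike.GradedSMul.smul_mem
        (SetLike.mul_mem_graded (SetLike.pow_mem_graded _ (hyc 0)) (hyc a)) (hxc b)
    have hexp : ∑ a : Fin (m+1), ∑ b : Fin k, (z ^ (j : ℕ) * yc a) • xc b = 0 := by
      calc ∑ a : Fin (m+1), ∑ b : Fin k, (z ^ (j : ℕ) * yc a) • xc b
          = z ^ (j : ℕ) • ((∑ a, yc a) • (∑ b, xc b)) := by
            rw [Finset.sum_smul, Finset.smul_sum]
            refine Finset.sum_congr rfl fun a _ => ?_
            rw [Finset.smul_sum, Finset.smul_sum]
            exact Finset.sum_congr rfl fun b _ => (mul_smul _ _ _)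
        _ = 0 := by rw [h, smul_zero]
    let π : M →+ M := ((ℳ e).subtype).comp ((DFinsupp.evalAddMonoidHom e).comp
      (DirectSum.decomposeAddEquiv ℳ).toAddMonoidHom)
    have hπ : ∀ w : M, π w = ((DirectSum.decompose ℳ w e : ℳ e) : M) := fun _ => rfl
    have hsum : ∑ a : Fin (m+1), ∑ b : Fin k, π ((z ^ (j : ℕ) * yc a) • xc b) = 0 := by
      have := congrArg π hexp
      rw [map_sum, map_zero] at this
      simpa [map_sum] using this
    have hz : ∀ (a : Fin (m+1)) (b : Fin k), ¬(a = 0 ∧ b = j) →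
        π ((z ^ (j : ℕ) * yc a) • xc b) = 0 := by
      intro a b hab
      rcases lt_trichotomy ((b : ℕ)) ((j : ℕ)) with hb | hb | hb
      · have hble : (b : ℕ) + 1 ≤ (j : ℕ) := hb
        have hterm0 : (z ^ (j : ℕ) * yc a) • xc b = 0 := by
          have hsplit : z ^ (j : ℕ) = z ^ ((j : ℕ) - ((b : ℕ) + 1)) * z ^ ((b : ℕ) + 1) := by
            rw [← pow_add, Nat.sub_add_cancel hble]
          calc (z ^ (j : ℕ) * yc a) • xc b
              = (z ^ ((j : ℕ) - ((b : ℕ) + 1)) * yc a) • (z ^ ((b : ℕ) + 1) • xc b) := by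
                rw [smul_smul]; congr 1; rw [hsplit]; ring
            _ = 0 := by rw [ih b hb, smul_zero]
        rw [hterm0, map_zero]
      · have hbj : b = j := Fin.ext hb
        have ha : a ≠ 0 := fun ha0 => hab ⟨ha0, hbj⟩
        have hla : l 0 < l a := hl (Fin.pos_of_ne_zero ha)
        have hne : (((j : ℕ) • l 0 + l a) + i b) ≠ e := by
          rw [he, hbj]
          intro heq
          have : l a = l 0 := by linarith [heq]
          omega
        rw [hπ, DirectSum.decompose_of_mem_ne ℳ (hterm a b) hne]
      · have hla : l 0 ≤ l a := hl.monotone (Fin.zero_le a)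
        have hib : i j < i b := hi (Fin.lt_def.mpr hb)
        have hne : (((j : ℕ) • l 0 + l a) + i b) ≠ e := by
          rw [he]
          intro heq
          omega
        rw [hπ, DirectSum.decompose_of_mem_ne ℳ (hterm a b) hne]
    have heq : ∑ a : Fin (m+1), ∑ b : Fin k, π ((z ^ (j : ℕ) * yc a) • xc b)
        = π ((z ^ (j : ℕ) * yc 0) • xc j) := by
      rw [Finset.sum_eq_single_of_mem (0 : Fin (m+1)) (Finset.mem_univ _)
          (fun a _ ha => Finset.sum_eq_zero fun b _ => hz a b (fun hc => ha hc.1)),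
        Finset.sum_eq_single_of_mem j (Finset.mem_univ _)
          (fun b _ hbj => hz 0 b (fun hc => hbj hc.2))]
    have hone : π ((z ^ (j : ℕ) * yc 0) • xc j) = 0 := heq ▸ hsum
    rw [hπ] at hone
    rw [DirectSum.decompose_of_mem_same ℳ (hterm 0 j)] at hone
    rw [pow_succ]
    exact hone
  intro j
  suffices key : ∀ n : ℕ, ∀ j : Fin k, (j : ℕ) ≤ n → (yc 0) ^ ((j : ℕ) + 1) • xc j = 0 by
    exact key (j : ℕ) j le_rfl
  intro n
  induction n with
  | zero => exact fun j hj => main j (fun b hb => absurd (hb.trans_le hj) (Nat.not_lt_zero _))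
  | succ n ihn => exact fun j hj => main j (fun b hb => ihn b (by omega))
end

section
/- Let R = ⊕_{n∈ℤ} R_n be a ℤ-graded commutative ring and M = ⊕_{n∈ℤ} M_n a graded R-module. For every element x ∈ M, the radical √(Ann_R(x)) of the annihilator of x is a homogeneous ideal of R. -/
open DirectSum

section aux
variable {R M : Type*} [CommRing R] [AddCommGroup M] [Module R M]
variable (𝒜 : ℤ → AddSubgroup R) (ℳ : ℤ → AddSubgroup M)
variable [GradedRing 𝒜] [DirectSum.Decomposition ℳ] [SetLike.GradedSMul 𝒜 ℳ]

lemma aux_decompose_smul {c : ℤ} {r : R} (hr : r ∈ 𝒜 c) (y : M) (k : ℤ) :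
    (decompose ℳ (r • y) (c + k) : M) = r • (decompose ℳ y k : M) := by
  induction y using DirectSum.Decomposition.inductionOn ℳ with
  | zero => simp
  | @homogeneous j m =>
      have hm : (m : M) ∈ ℳ j := m.2
      have hrm : r • (m : M) ∈ ℳ (c + j) := SetLike.GradedSMul.smul_mem hr hm
      by_cases h : j = k
      · subst h
        rw [decompose_of_mem_same ℳ hrm, decompose_of_mem_same ℳ hm]
      · rw [decompose_of_mem_ne ℳ hrm (by omega), decompose_of_mem_ne ℳ hm h, smul_zero]
  | add m m' hm hm' =>
      rw [smul_add, decompose_add, decompose_add, DirectSum.add_apply,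
        DirectSum.add_apply, AddSubgroup.coe_add, AddSubgroup.coe_add, hm, hm', smul_add]

lemma aux_decompose_smul' {c : ℤ} {r : R} (hr : r ∈ 𝒜 c) (y : M) (k : ℤ) :
    (decompose ℳ (r • y) k : M) = r • (decompose ℳ y (k - c) : M) := by
  have := aux_decompose_smul 𝒜 ℳ hr y (k - c)
  rwa [show c + (k - c) = k by ring] at this

open Classical in
lemma aux_bound {a : R} {d : ℤ} (ha : ∀ i, d < i → (decompose 𝒜 a i : R) = 0)
    {y : M} {t : ℤ} (hy : ∀ j, t < j → (decompose ℳ y j : M) = 0) :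
    (∀ k, d + t < k → (decompose ℳ (a • y) k : M) = 0) ∧
      (decompose ℳ (a • y) (d + t) : M) = (decompose 𝒜 a d : R) • (decompose ℳ y t : M) := by
  have expand : ∀ k : ℤ, (decompose ℳ (a • y) k : M) =
      ∑ i ∈ (decompose 𝒜 a).support, (decompose 𝒜 a i : R) • (decompose ℳ y (k - i) : M) := by
    intro k
    conv_lhs => rw [← DirectSum.sum_support_decompose 𝒜 a]
    rw [Finset.sum_smul, decompose_sum, DFinsupp.finset_sum_apply, AddSubgroup.val_finset_sum]
    exact Finset.sum_congr rfl fun i _ =>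
      aux_decompose_smul' 𝒜 ℳ (SetLike.coe_mem _) y k
  constructor
  · intro k hk
    rw [expand k]
    refine Finset.sum_eq_zero fun i hi => ?_
    by_cases hid : d < i
    · rw [ha i hid, zero_smul]
    · rw [hy (k - i) (by omega), smul_zero]
  · rw [expand (d + t)]
    rw [Finset.sum_eq_single d]
    · rw [show d + t - d = t by ring]
    · intro i hi hid
      by_cases h : d < i
      · rw [ha i h, zero_smul]
      · rw [hy (d + t - i) (by omega), smul_zero]
    · intro hd
      rw [DFinsupp.notMem_support_iff.mp hd]
      simp

lemma aux_pow {a : R} {d : ℤ} (ha : ∀ i, d < i → (decompose 𝒜 a i : R) = 0)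
    {y : M} {t : ℤ} (hy : ∀ j, t < j → (decompose ℳ y j : M) = 0) (n : ℕ) :
    (∀ k, (n : ℤ) * d + t < k → (decompose ℳ (a ^ n • y) k : M) = 0) ∧
      (decompose ℳ (a ^ n • y) ((n : ℤ) * d + t) : M)
        = (decompose 𝒜 a d : R) ^ n • (decompose ℳ y t : M) := by
  induction n with
  | zero =>
      constructor
      · intro k hk
        rw [pow_zero, one_smul]
        exact hy k (by push_cast at hk; omega)
      · rw [pow_zero, one_smul, pow_zero, one_smul,
          show ((0 : ℕ) : ℤ) * d + t = t by push_cast; ring]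
  | succ n ih =>
      have h1 : a ^ (n + 1) • y = a • (a ^ n • y) := by
        rw [pow_succ, mul_comm, mul_smul]
      have h2 : ((n : ℤ) + 1) * d + t = d + ((n : ℤ) * d + t) := by ring
      have hb := aux_bound 𝒜 ℳ ha ih.1
      constructor
      · intro k hk
        rw [h1]
        exact hb.1 k (by push_cast at hk ⊢; omega)
      · rw [h1, show (((n : ℕ) + 1 : ℕ) : ℤ) * d + t = d + ((n : ℤ) * d + t) by push_cast; ring,
          hb.2, ih.2, smul_smul, ← pow_succ']

open Classical in
lemma aux_key {a : R} {d : ℤ} (ha : ∀ i, d < i → (decompose 𝒜 a i : R) = 0) :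
    ∀ (N : ℕ) (x : M), (decompose ℳ x).support.card ≤ N → (∃ n : ℕ, a ^ n • x = 0) →
      ∃ m : ℕ, (decompose 𝒜 a d : R) ^ m • x = 0 := by
  intro N
  induction N with
  | zero =>
      intro x hcard _
      have hx : x = 0 := by
        rw [← DirectSum.sum_support_decompose ℳ x,
          Finset.card_eq_zero.mp (Nat.le_zero.mp hcard), Finset.sum_empty]
      exact ⟨0, by rw [hx, smul_zero]⟩
  | succ N ih =>
      intro x hcard ⟨n, hn⟩
      by_cases hsupp : (decompose ℳ x).support = ∅
      · have hx : x = 0 := by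
          rw [← DirectSum.sum_support_decompose ℳ x, hsupp, Finset.sum_empty]
        exact ⟨0, by rw [hx, smul_zero]⟩
      · have hne : (decompose ℳ x).support.Nonempty := Finset.nonempty_of_ne_empty hsupp
        set e := (decompose ℳ x).support.max' hne with he
        have hx : ∀ j, e < j → (decompose ℳ x j : M) = 0 := by
          intro j hj
          have : j ∉ (decompose ℳ x).support := fun h => by
            have := Finset.le_max' _ j h; omega
          rw [DFinsupp.notMem_support_iff.mp this]; rfl
        -- top component of a^n • x vanishes
        have htop : (decompose 𝒜 a d : R) ^ n • (decompose ℳ x e : M) = 0 := by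
          have := (aux_pow 𝒜 ℳ ha hx n).2
          rw [hn] at this
          simpa using this.symm
        set b : R := (decompose 𝒜 a d : R) ^ n with hb
        have hbmem : b ∈ 𝒜 ((n : ℤ) * d) := by
          have := SetLike.pow_mem_graded n (SetLike.coe_mem ((decompose 𝒜 a) d))
          simpa [hb] using this
        set z : M := b • x with hz
        -- support of z is small
        have hzsupp : (decompose ℳ z).support ⊆
            (((decompose ℳ x).support.erase e).image (fun j => (n : ℤ) * d + j)) := by
          intro k hk
          have hk' : (decompose ℳ z k : M) ≠ 0 := by
            intro h
            apply DFinsupp.mem_support_iff.mp hk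
            exact Subtype.ext (by simpa using h)
          rw [hz, aux_decompose_smul' 𝒜 ℳ hbmem x k] at hk'
          have h1 : (decompose ℳ x (k - (n : ℤ) * d) : M) ≠ 0 := fun h => hk' (by rw [h, smul_zero])
          have h2 : k - (n : ℤ) * d ∈ (decompose ℳ x).support := by
            rw [DFinsupp.mem_support_iff]
            exact fun h => h1 (by rw [h]; rfl)
          have h3 : k - (n : ℤ) * d ≠ e := by
            intro h
            rw [h] at hk'
            exact hk' htop
          exact Finset.mem_image.mpr ⟨k - (n : ℤ) * d, Finset.mem_erase.mpr ⟨h3, h2⟩, by ring⟩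
        have hzcard : (decompose ℳ z).support.card ≤ N := by
          calc (decompose ℳ z).support.card
              ≤ (((decompose ℳ x).support.erase e).image (fun j => (n : ℤ) * d + j)).card :=
                Finset.card_le_card hzsupp
            _ ≤ ((decompose ℳ x).support.erase e).card := Finset.card_image_le
            _ = (decompose ℳ x).support.card - 1 :=
                Finset.card_erase_of_mem (Finset.max'_mem _ hne)
            _ ≤ N := by omega
        have hzann : ∃ n' : ℕ, a ^ n' • z = 0 := by
          refine ⟨n, ?_⟩
          rw [hz, smul_comm, hn, smul_zero]
        obtain ⟨m, hm⟩ := ih z hzcard hzann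
        refine ⟨m + n, ?_⟩
        rw [pow_add, mul_smul]
        exact hm
end aux

/-- Let `R` be a `ℤ`-graded commutative ring and `M` a graded `R`-module.  For every `x ∈ M`,
the radical of the annihilator of `x` is a homogeneous ideal of `R`. -/
theorem radical_torsionOf_isHomogeneous
    {R M : Type*} [CommRing R] [AddCommGroup M] [Module R M]
    (𝒜 : ℤ → AddSubgroup R) (ℳ : ℤ → AddSubgroup M)
    [GradedRing 𝒜] [DirectSum.Decomposition ℳ] [SetLike.GradedSMul 𝒜 ℳ]
    (x : M) :
    Ideal.IsHomogeneous 𝒜 (Ideal.torsionOf R M x).radical := by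
  classical
  set I := (Ideal.torsionOf R M x).radical with hI
  have mem_iff : ∀ r : R, r ∈ I ↔ ∃ n : ℕ, r ^ n • x = 0 := by
    intro r
    rw [hI, Ideal.mem_radical_iff]
    exact exists_congr fun n => Ideal.mem_torsionOf_iff x (r ^ n)
  suffices h : ∀ (N : ℕ) (a : R), (decompose 𝒜 a).support.card ≤ N → a ∈ I →
      ∀ i, (decompose 𝒜 a i : R) ∈ I by
    intro i a hIa
    exact h _ a le_rfl hIa i
  intro N
  induction N with
  | zero =>
      intro a hcard _ i
      have hs : (decompose 𝒜 a).support = ∅ := Finset.card_eq_zero.mp (Nat.le_zero.mp hcard)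
      have : i ∉ (decompose 𝒜 a).support := by rw [hs]; exact Finset.notMem_empty i
      rw [DFinsupp.notMem_support_iff.mp this]
      exact I.zero_mem
  | succ N ih =>
      intro a hcard ha i
      by_cases hsupp : (decompose 𝒜 a).support = ∅
      · have : i ∉ (decompose 𝒜 a).support := by rw [hsupp]; exact Finset.notMem_empty i
        rw [DFinsupp.notMem_support_iff.mp this]
        exact I.zero_mem
      · have hne : (decompose 𝒜 a).support.Nonempty := Finset.nonempty_of_ne_empty hsupp
        set d := (decompose 𝒜 a).support.max' hne with hd
        have had : ∀ j, d < j → (decompose 𝒜 a j : R) = 0 := by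
          intro j hj
          have : j ∉ (decompose 𝒜 a).support := fun h => by
            have := Finset.le_max' _ j h; omega
          rw [DFinsupp.notMem_support_iff.mp this]; rfl
        obtain ⟨m, hm⟩ := aux_key 𝒜 ℳ had _ x le_rfl ((mem_iff a).mp ha)
        have hdI : (decompose 𝒜 a d : R) ∈ I := (mem_iff _).mpr ⟨m, hm⟩
        set b : R := a - (decompose 𝒜 a d : R) with hb
        have hbI : b ∈ I := I.sub_mem ha hdI
        have hbj : ∀ j, (decompose 𝒜 b j : R) =
            if j = d then 0 else (decompose 𝒜 a j : R) := by
          intro j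
          rw [hb, decompose_sub, DirectSum.sub_apply, AddSubgroup.coe_sub]
          by_cases h : j = d
          · subst h
            rw [decompose_of_mem_same 𝒜 (SetLike.coe_mem ((decompose 𝒜 a) d)), if_pos rfl,
              sub_self]
          · rw [decompose_of_mem_ne 𝒜 (SetLike.coe_mem ((decompose 𝒜 a) d)) (Ne.symm h),
              if_neg h, sub_zero]
        have hbsupp : (decompose 𝒜 b).support ⊆ (decompose 𝒜 a).support.erase d := by
          intro j hj
          have hj' : (decompose 𝒜 b j : R) ≠ 0 := fun h =>
            DFinsupp.mem_support_iff.mp hj (Subtype.ext (by simpa using h))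
          rw [hbj j] at hj'
          by_cases h : j = d
          · simp [h] at hj'
          · refine Finset.mem_erase.mpr ⟨h, DFinsupp.mem_support_iff.mpr fun hz => ?_⟩
            simp [h, hz] at hj'
        have hbcard : (decompose 𝒜 b).support.card ≤ N := by
          calc (decompose 𝒜 b).support.card
              ≤ ((decompose 𝒜 a).support.erase d).card := Finset.card_le_card hbsupp
            _ = (decompose 𝒜 a).support.card - 1 :=
                Finset.card_erase_of_mem (Finset.max'_mem _ hne)
            _ ≤ N := by omega
        by_cases h : i = d
        · subst h; exact hdI
        · have := ih b hbcard hbI i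
          rwa [hbj i, if_neg h] at this
end

section
/- Let R = ⊕_{n∈ℤ} R_n be a Noetherian ℤ-graded commutative ring, let I and J be homogeneous ideals of R, and let M = ⊕_{n∈ℤ} M_n be a graded R-module. If x ∈ Γ_{I,J}(M), then every homogeneous component of x lies in Γ_{I,J}(M); consequently Γ_{I,J}(M) is a graded submodule of M. -/
open DirectSum Polynomial

/-- Component extraction commutes with homogeneous scalar multiplication. -/
private lemma comp_smul_s3 {R M : Type*} [CommRing R] [AddCommGroup M] [Module R M]
    (𝒜 : ℤ → AddSubgroup R) (ℳ : ℤ → AddSubgroup M)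
    [GradedRing 𝒜] [DirectSum.Decomposition ℳ] [SetLike.GradedSMul 𝒜 ℳ]
    (c e : ℤ) (r : R) (hr : r ∈ 𝒜 c) (y : M) :
    (DirectSum.decompose ℳ (r • y) e : M) = r • (DirectSum.decompose ℳ y (e - c) : M) := by
  induction y using DirectSum.Decomposition.inductionOn ℳ with
  | zero => simp
  | @homogeneous i m =>
      have hm : (m : M) ∈ ℳ i := m.2
      have hrm : r • (m : M) ∈ ℳ (c + i) := SetLike.GradedSMul.smul_mem hr hm
      by_cases h : i = e - c
      · subst h
        rw [DirectSum.decompose_of_mem_same ℳ hm,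
          DirectSum.decompose_of_mem_same ℳ (show r • (m : M) ∈ ℳ e by
            simpa [show c + (e - c) = e by ring] using hrm)]
      · rw [DirectSum.decompose_of_mem_ne ℳ hrm (by omega),
          DirectSum.decompose_of_mem_ne ℳ hm h, smul_zero]
  | add m m' hm hm' =>
      rw [smul_add, DirectSum.decompose_add, DirectSum.decompose_add]
      push_cast [DirectSum.add_apply]
      rw [hm, hm', smul_add]

/-- Let `R` be a Noetherian `ℤ`-graded commutative ring, `I`, `J` homogeneous ideals of `R`, and
`M` a graded `R`-module.  If `x ∈ Γ_{I,J}(M)` (i.e. `I ^ n ⊆ Ann_R(x) + J` for some `n ≥ 1`),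
then every homogeneous component of `x` lies in `Γ_{I,J}(M)`; consequently `Γ_{I,J}(M)` is a
graded submodule of `M`. -/
theorem decompose_mem_pairTorsion
    {R M : Type*} [CommRing R] [IsNoetherianRing R] [AddCommGroup M] [Module R M]
    (𝒜 : ℤ → AddSubgroup R) (ℳ : ℤ → AddSubgroup M)
    [GradedRing 𝒜] [DirectSum.Decomposition ℳ] [SetLike.GradedSMul 𝒜 ℳ]
    (I J : Ideal R) (hI : Ideal.IsHomogeneous 𝒜 I) (hJ : Ideal.IsHomogeneous 𝒜 J)
    (x : M) (hx : ∃ n : ℕ, 1 ≤ n ∧ I ^ n ≤ Ideal.torsionOf R M x + J) :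
    ∀ d : ℤ, ∃ n : ℕ, 1 ≤ n ∧
      I ^ n ≤ Ideal.torsionOf R M (DirectSum.decompose ℳ x d : M) + J := by
  classical
  obtain ⟨n, hn1, hIn⟩ := hx
  -- `N` is the submodule generated by all homogeneous components of `x`.
  set S : Set M := Set.range (fun d : ℤ => (DirectSum.decompose ℳ x d : M)) with hS
  set N : Submodule R M := Submodule.span R S with hN
  have hSfin : S.Finite := by
    have hsub : S ⊆ insert (0 : M) ((fun d : ℤ => (DirectSum.decompose ℳ x d : M)) ''
        (DFinsupp.support (DirectSum.decompose ℳ x) : Set ℤ)) := by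
      rintro _ ⟨d, rfl⟩
      by_cases hd : DirectSum.decompose ℳ x d = 0
      · simp [hd]
      · exact Set.mem_insert_iff.mpr (Or.inr ⟨d, by simpa [DFinsupp.mem_support_iff] using hd,
          rfl⟩)
    exact Set.Finite.subset (((DFinsupp.support
      (DirectSum.decompose ℳ x)).finite_toSet.image _).insert 0) hsub
  have hNfg : N.FG := ⟨hSfin.toFinset, by rw [Set.Finite.coe_toFinset]⟩
  have hmemN : ∀ d : ℤ, (DirectSum.decompose ℳ x d : M) ∈ N := fun d =>
    Submodule.subset_span ⟨d, rfl⟩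
  -- `I ^ n` is a homogeneous ideal.
  have hInh : (I ^ n).IsHomogeneous 𝒜 := by
    have : ∀ j : ℕ, (I ^ j).IsHomogeneous 𝒜 := by
      intro j
      induction j with
      | zero => simpa using Ideal.IsHomogeneous.top 𝒜
      | succ k ih => rw [pow_succ]; exact Ideal.IsHomogeneous.mul ih hI
    exact this n
  -- Step 1: `I ^ n • N ≤ J • N`.
  have hIN : (I ^ n) • N ≤ J • N := by
    obtain ⟨T, hT⟩ := (Ideal.IsHomogeneous.iff_exists 𝒜 _).mp hInh
    rw [Submodule.smul_le]
    intro r hr y hy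
    induction hy using Submodule.span_induction with
    | zero => rw [smul_zero]; exact Submodule.zero_mem _
    | add y z _ _ hy hz => rw [smul_add]; exact Submodule.add_mem _ hy hz
    | smul c y _ hy => rw [smul_comm]; exact Submodule.smul_mem _ c hy
    | mem y hymem =>
      obtain ⟨d, rfl⟩ := hymem
      rw [hT] at hr
      induction hr using Submodule.span_induction with
      | zero => rw [zero_smul]; exact Submodule.zero_mem _
      | add r s _ _ hr hs => rw [add_smul]; exact Submodule.add_mem _ hr hs
      | smul c r _ hr => rw [smul_eq_mul, mul_smul]; exact Submodule.smul_mem _ c hr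
      | mem s hsmem =>
        obtain ⟨⟨s, hshom⟩, _, rfl⟩ := hsmem
        obtain ⟨c, hc⟩ := hshom
        have hsIn : s ∈ I ^ n := by
          rw [hT]; exact Submodule.subset_span ⟨⟨s, ⟨c, hc⟩⟩, ‹_›, rfl⟩
        obtain ⟨a, ha, b, hb, hab⟩ := Submodule.mem_sup.mp (hIn hsIn)
        rw [Ideal.mem_torsionOf_iff] at ha
        have hsx : s • x = b • x := by
          rw [← hab, add_smul, ha, zero_add]
        have h1 : (DirectSum.decompose ℳ (s • x) (c + d) : M)
            = s • (DirectSum.decompose ℳ x d : M) := by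
          rw [comp_smul_s3 𝒜 ℳ c (c + d) s hc x, show c + d - c = d by ring]
        have key : s • (DirectSum.decompose ℳ x d : M)
            = ∑ k ∈ DFinsupp.support (DirectSum.decompose 𝒜 b),
              (DirectSum.decompose 𝒜 b k : R) • (DirectSum.decompose ℳ x (c + d - k) : M) := by
          rw [← h1, hsx]
          conv_lhs => rw [← DirectSum.sum_support_decompose 𝒜 b]
          rw [Finset.sum_smul, DirectSum.decompose_sum, DFinsupp.finset_sum_apply]
          push_cast
          refine Finset.sum_congr rfl fun k _ => ?_
          rw [comp_smul_s3 𝒜 ℳ k (c + d) _ (SetLike.coe_mem _) x]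
        rw [key]
        exact Submodule.sum_mem _ fun k _ =>
          Submodule.smul_mem_smul (hJ k hb) (hmemN _)
  -- Step 2 (Cayley–Hamilton): `I ^ n ≤ √(Ann N + J)`.
  have hfin : Module.Finite R ↥N := Module.Finite.iff_fg.mpr hNfg
  have hrad : I ^ n ≤ (N.annihilator + J).radical := by
    intro a ha
    set f : Module.End R ↥N := a • LinearMap.id with hf
    have hfr : LinearMap.range f ≤ J • (⊤ : Submodule R ↥N) := by
      rintro _ ⟨u, rfl⟩
      rw [Submodule.mem_smul_top_iff]
      show ((a • u : ↥N) : M) ∈ J • N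
      rw [Submodule.coe_smul]
      exact hIN (Submodule.smul_mem_smul ha u.2)
    obtain ⟨p, hmonic, _, hcoeff, haeval⟩ :=
      LinearMap.exists_monic_and_coeff_mem_pow_and_aeval_eq_zero_of_range_le_smul R f J hfr
    refine ⟨p.natDegree, ?_⟩
    have heval : p.eval a ∈ N.annihilator := by
      rw [Submodule.mem_annihilator]
      intro y hy
      have hfalg : f = algebraMap R (Module.End R ↥N) a := rfl
      rw [hfalg, aeval_algebraMap_apply_eq_algebraMap_eval] at haeval
      have h2 := congrArg (fun g : Module.End R ↥N => (g ⟨y, hy⟩ : M)) haeval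
      have h3 : algebraMap R (Module.End R ↥N) (p.eval a) = p.eval a • LinearMap.id := rfl
      rw [h3] at h2
      simpa using h2
    have hsum : (∑ i ∈ Finset.range p.natDegree, p.coeff i * a ^ i) ∈ J := by
      refine Ideal.sum_mem _ fun i hi => Ideal.mul_mem_right _ _ ?_
      have hi' : i < p.natDegree := Finset.mem_range.mp hi
      exact Ideal.pow_le_self (by omega : p.natDegree - i ≠ 0) (hcoeff i)
    have hpow : a ^ p.natDegree
        = p.eval a - ∑ i ∈ Finset.range p.natDegree, p.coeff i * a ^ i := by
      rw [Polynomial.eval_eq_sum_range, Finset.sum_range_succ,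
        hmonic.coeff_natDegree, one_mul]
      ring
    rw [hpow]
    exact Submodule.sub_mem _ (Ideal.mem_sup_left heval) (Ideal.mem_sup_right hsum)
  obtain ⟨m, hm⟩ := Ideal.exists_pow_le_of_le_radical_of_fg hrad (IsNoetherian.noetherian _)
  intro d
  refine ⟨n * (m + 1), le_trans hn1 (Nat.le_mul_of_pos_right n (Nat.succ_pos m)), ?_⟩
  have hann : N.annihilator ≤ Ideal.torsionOf R M (DirectSum.decompose ℳ x d : M) := by
    intro a ha
    rw [Ideal.mem_torsionOf_iff]
    exact Submodule.mem_annihilator.mp ha _ (hmemN d)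
  calc I ^ (n * (m + 1)) = (I ^ n) ^ (m + 1) := by rw [pow_mul]
    _ ≤ (I ^ n) ^ m := Ideal.pow_le_pow_right (Nat.le_succ m)
    _ ≤ N.annihilator + J := hm
    _ ≤ Ideal.torsionOf R M (DirectSum.decompose ℳ x d : M) + J := sup_le_sup_right hann J
end

section
/- Let R be a Noetherian commutative ring, let I and J be ideals of R, let M be an R-module, and let x ∈ M. Then x ∈ Γ_{I,J}(M) if and only if I^n ⊆ √(Ann_R(x)) + J for some integer n ≥ 1. -/
lemma add_pow_le_pow_add {R : Type*} [CommRing R] (A J : Ideal R) :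
    ∀ k : ℕ, (A + J) ^ (k + 1) ≤ A ^ (k + 1) + J := by
  intro k
  induction k with
  | zero => simpa using le_refl (A + J)
  | succ k ih =>
      calc (A + J) ^ (k + 2) = (A + J) ^ (k + 1) * (A + J) := by ring
        _ ≤ (A ^ (k + 1) + J) * (A + J) := Ideal.mul_mono_left ih
        _ ≤ A ^ (k + 2) + J := by
            rw [add_mul, mul_add, mul_add]
            refine sup_le (sup_le ?_ ?_) (sup_le ?_ ?_)
            · exact le_sup_of_le_left (by rw [← pow_succ])
            · exact le_sup_of_le_right Ideal.mul_le_right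
            · exact le_sup_of_le_right Ideal.mul_le_left
            · exact le_sup_of_le_right Ideal.mul_le_right

/-- Let `R` be a commutative Noetherian ring, `I`, `J` ideals of `R`, `M` an `R`-module and
`x ∈ M`.  Then `x ∈ Γ_{I,J}(M)` if and only if `I ^ n ⊆ √(Ann_R x) + J` for some `n ≥ 1`. -/
theorem mem_pairTorsion_iff_pow_le_radical_add
    {R M : Type*} [CommRing R] [IsNoetherianRing R] [AddCommGroup M] [Module R M]
    (I J : Ideal R) (x : M) :
    (∃ n : ℕ, 1 ≤ n ∧ I ^ n ≤ Ideal.torsionOf R M x + J) ↔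
      (∃ n : ℕ, 1 ≤ n ∧ I ^ n ≤ (Ideal.torsionOf R M x).radical + J) := by
  constructor
  · rintro ⟨n, hn, hle⟩
    exact ⟨n, hn, hle.trans (add_le_add Ideal.le_radical (le_refl J))⟩
  · rintro ⟨n, hn, hle⟩
    set A := Ideal.torsionOf R M x
    obtain ⟨k, hk⟩ := Ideal.exists_radical_pow_le_of_fg A (IsNoetherian.noetherian _)
    refine ⟨n * (k + 1), Nat.one_le_iff_ne_zero.mpr (by positivity), ?_⟩
    calc I ^ (n * (k + 1)) = (I ^ n) ^ (k + 1) := by rw [← pow_mul]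
      _ ≤ (A.radical + J) ^ (k + 1) := Ideal.pow_right_mono hle _
      _ ≤ A.radical ^ (k + 1) + J := add_pow_le_pow_add _ _ _
      _ ≤ A + J := add_le_add ((Ideal.pow_le_pow_right (Nat.le_succ k)).trans hk) (le_refl J)
end

section
/- Let R = ⊕_{n∈ℤ} R_n be a Noetherian ℤ-graded commutative ring, let I and J be homogeneous ideals of R, and let M = ⊕_{n∈ℤ} M_n be a graded R-module. Then Γ_{I,J}(M) = ⋃_{𝔞 ∈ *W̃(I,J)} Γ_𝔞(M), where *W̃(I,J) denotes the set of homogeneous ideals 𝔞 of R such that I^n ⊆ 𝔞 + J for some integer n ≥ 1. -/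
open DirectSum
set_option synthInstance.maxHeartbeats 1000000
set_option maxHeartbeats 1000000

section Helpers

variable {R M : Type*} [CommRing R] [AddCommGroup M] [Module R M]
  (𝒜 : ℤ → AddSubgroup R) (ℳ : ℤ → AddSubgroup M)
  [GradedRing 𝒜] [DirectSum.Decomposition ℳ] [SetLike.GradedSMul 𝒜 ℳ]

/-- Projection onto the degree `i` component, as an `AddMonoidHom`. -/
noncomputable def prM (i : ℤ) : M →+ M :=
  (AddSubmonoidClass.subtype (ℳ i)).comp <|
    (DFinsupp.evalAddMonoidHom i).comp (DirectSum.decomposeAddEquiv ℳ).toAddMonoidHom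

lemma prM_apply (i : ℤ) (x : M) : prM ℳ i x = (DirectSum.decompose ℳ x i : M) := rfl

lemma smul_mem_graded {c : R} {m : ℤ} (hc : c ∈ 𝒜 m) {y : M} {j : ℤ} (hy : y ∈ ℳ j) :
    c • y ∈ ℳ (m + j) := by
  have := SetLike.GradedSMul.smul_mem hc hy
  rwa [vadd_eq_add] at this

lemma decompose_smul_of_mem {c : R} {m : ℤ} (hc : c ∈ 𝒜 m) (x : M) (j : ℤ) :
    (DirectSum.decompose ℳ (c • x) (m + j) : M) = c • (DirectSum.decompose ℳ x j : M) := by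
  classical
  conv_lhs => rw [← DirectSum.sum_support_decompose ℳ x, Finset.smul_sum]
  rw [← prM_apply, map_sum]
  have hterm : ∀ k, prM ℳ (m + j) (c • (DirectSum.decompose ℳ x k : M)) =
      if k = j then c • (DirectSum.decompose ℳ x j : M) else 0 := by
    intro k
    rw [prM_apply]
    by_cases hk : k = j
    · subst hk
      simp only [if_pos rfl]
      exact DirectSum.decompose_of_mem_same ℳ
        (smul_mem_graded 𝒜 ℳ hc (SetLike.coe_mem _))
    · rw [if_neg hk]
      exact DirectSum.decompose_of_mem_ne ℳ
        (smul_mem_graded 𝒜 ℳ hc (SetLike.coe_mem _)) (by omega)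
  rw [Finset.sum_congr rfl (fun k _ => hterm k), Finset.sum_ite_eq' _ j]
  by_cases hj : j ∈ (DirectSum.decompose ℳ x).support
  · rw [if_pos hj]
  · rw [if_neg hj]
    have : (DirectSum.decompose ℳ x j : M) = 0 := by
      rw [DFinsupp.notMem_support_iff.mp hj]; rfl
    rw [this, smul_zero]

lemma mem_support_le {r : R} {p : ℤ} (h : ∀ i : ℤ, p < i → (DirectSum.decompose 𝒜 r i : R) = 0)
    {j : ℤ} (hj : (DirectSum.decompose 𝒜 r) j ≠ 0) : j ≤ p := by
  by_contra hcon
  exact hj (ZeroMemClass.coe_eq_zero.mp (h j (not_le.mp hcon)))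

lemma decompose_smul_bound {p q : ℤ} {b : R} {x : M}
    (hb : ∀ i : ℤ, p < i → (DirectSum.decompose 𝒜 b i : R) = 0)
    (hx : ∀ i : ℤ, q < i → (DirectSum.decompose ℳ x i : M) = 0) :
    ∀ i : ℤ, p + q < i → (DirectSum.decompose ℳ (b • x) i : M) = 0 := by
  classical
  intro i hi
  conv_lhs => rw [← DirectSum.sum_support_decompose 𝒜 b, Finset.sum_smul]
  rw [← prM_apply, map_sum]
  refine Finset.sum_eq_zero fun j hj => ?_
  have hjp : j ≤ p := mem_support_le 𝒜 hb (DFinsupp.mem_support_iff.mp hj)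
  rw [prM_apply]
  have h2 := decompose_smul_of_mem 𝒜 ℳ (SetLike.coe_mem ((DirectSum.decompose 𝒜 b) j)) x (i - j)
  rw [show j + (i - j) = i from by ring] at h2
  rw [h2, hx (i - j) (by omega), smul_zero]

lemma decompose_mul_bound {p q : ℤ} {r r' : R}
    (h : ∀ i : ℤ, p < i → (DirectSum.decompose 𝒜 r i : R) = 0)
    (h' : ∀ i : ℤ, q < i → (DirectSum.decompose 𝒜 r' i : R) = 0) :
    ∀ i : ℤ, p + q < i → (DirectSum.decompose 𝒜 (r * r') i : R) = 0 := by
  classical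
  intro i hi
  conv_lhs => rw [← DirectSum.sum_support_decompose 𝒜 r, Finset.sum_mul]
  rw [← prM_apply, map_sum]
  refine Finset.sum_eq_zero fun j hj => ?_
  have hjp : j ≤ p := mem_support_le 𝒜 h (DFinsupp.mem_support_iff.mp hj)
  conv_lhs => rw [prM_apply, ← DirectSum.sum_support_decompose 𝒜 r', Finset.mul_sum,
    ← prM_apply, map_sum]
  refine Finset.sum_eq_zero fun k hk => ?_
  have hkq : k ≤ q := mem_support_le 𝒜 h' (DFinsupp.mem_support_iff.mp hk)
  rw [prM_apply]
  exact DirectSum.decompose_of_mem_ne 𝒜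
    (SetLike.mul_mem_graded (SetLike.coe_mem _) (SetLike.coe_mem _)) (by omega)

lemma decompose_pow_bound {p : ℤ} {r : R}
    (h : ∀ i : ℤ, p < i → (DirectSum.decompose 𝒜 r i : R) = 0) :
    ∀ s : ℕ, ∀ i : ℤ, (s : ℤ) * p < i → (DirectSum.decompose 𝒜 (r ^ s) i : R) = 0 := by
  intro s
  induction s with
  | zero =>
    intro i hi
    rw [Nat.cast_zero, zero_mul] at hi
    rw [pow_zero]
    exact DirectSum.decompose_of_mem_ne 𝒜 (SetLike.one_mem_graded 𝒜) (by omega)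
  | succ s ihs =>
    intro i hi
    rw [pow_succ]
    refine decompose_mul_bound 𝒜 ihs h i ?_
    push_cast at hi
    linarith
open Classical in
lemma step1 : ∀ (t : ℕ) (x : M), ((DirectSum.decompose ℳ x).support.card ≤ t) →
    ∀ {m : ℤ} {c b : R}, c ∈ 𝒜 m → (∀ i : ℤ, m - 1 < i → (DirectSum.decompose 𝒜 b i : R) = 0) →
    (c + b) • x = 0 → ∃ N : ℕ, c ^ N • x = 0 := by
  classical
  intro t
  induction t with
  | zero =>
    intro x hx m c b _ _ _
    refine ⟨1, ?_⟩
    have hs : DirectSum.decompose ℳ x = 0 :=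
      DFinsupp.support_eq_empty.mp (Finset.card_eq_zero.mp (Nat.le_zero.mp hx))
    have hx0 : x = 0 := by
      have := congrArg (DirectSum.decompose ℳ).symm hs
      rwa [Equiv.symm_apply_apply, DirectSum.decompose_symm_zero] at this
    rw [hx0, smul_zero]
  | succ t ih =>
    intro x hx m c b hc hb hcb
    by_cases h0 : (DirectSum.decompose ℳ x).support = ∅
    · refine ⟨1, ?_⟩
      have hs : DirectSum.decompose ℳ x = 0 := DFinsupp.support_eq_empty.mp h0
      have hx0 : x = 0 := by
        have := congrArg (DirectSum.decompose ℳ).symm hs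
        rwa [Equiv.symm_apply_apply, DirectSum.decompose_symm_zero] at this
      rw [hx0, smul_zero]
    · have hne : (DirectSum.decompose ℳ x).support.Nonempty := Finset.nonempty_iff_ne_empty.2 h0
      set e := (DirectSum.decompose ℳ x).support.max' hne with he
      have hxe : ∀ i : ℤ, e < i → (DirectSum.decompose ℳ x i : M) = 0 := by
        intro i hi
        have : i ∉ (DirectSum.decompose ℳ x).support := fun hmem =>
          absurd (Finset.le_max' _ _ hmem) (not_le.2 hi)
        rw [DFinsupp.notMem_support_iff.mp this]; rfl
      -- the component of `(c+b) • x` in degree `m + e` is `c • x_e`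
      have hce : c • (DirectSum.decompose ℳ x e : M) = 0 := by
        have h1 : (DirectSum.decompose ℳ ((c + b) • x) (m + e) : M) =
            c • (DirectSum.decompose ℳ x e : M) := by
          rw [add_smul, ← prM_apply, map_add, prM_apply, prM_apply,
            decompose_smul_of_mem 𝒜 ℳ hc x e,
            decompose_smul_bound 𝒜 ℳ hb hxe (m + e) (by omega), add_zero]
        rw [hcb] at h1
        rw [← h1, DirectSum.decompose_zero]; rfl
      set y := c • x with hy
      have hyc : ∀ i : ℤ, (DirectSum.decompose ℳ y i : M) =
          c • (DirectSum.decompose ℳ x (i - m) : M) := by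
        intro i
        have h2 := decompose_smul_of_mem 𝒜 ℳ hc x (i - m)
        rwa [show m + (i - m) = i from by ring] at h2
      have hsub : (DirectSum.decompose ℳ y).support ⊆
          ((DirectSum.decompose ℳ x).support.erase e).image (fun j => m + j) := by
        intro i hi
        have hiy : (DirectSum.decompose ℳ y i : M) ≠ 0 := fun h =>
          DFinsupp.mem_support_iff.mp hi (ZeroMemClass.coe_eq_zero.mp h)
        rw [hyc i] at hiy
        have hx' : (DirectSum.decompose ℳ x (i - m)) ≠ 0 := by
          intro h
          exact hiy (by rw [h]; simp)
        have hne' : i - m ≠ e := by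
          intro h
          rw [h] at hiy
          exact hiy hce
        exact Finset.mem_image.2 ⟨i - m,
          Finset.mem_erase.2 ⟨hne', DFinsupp.mem_support_iff.2 hx'⟩, by ring⟩
      have hcard : (DirectSum.decompose ℳ y).support.card ≤ t := by
        have h3 := Finset.card_le_card hsub
        have h4 : (((DirectSum.decompose ℳ x).support.erase e).image (fun j => m + j)).card ≤
            ((DirectSum.decompose ℳ x).support.erase e).card := Finset.card_image_le
        have h5 : ((DirectSum.decompose ℳ x).support.erase e).card < (DirectSum.decompose ℳ x).support.card := Finset.card_erase_lt_of_mem ((DirectSum.decompose ℳ x).support.max'_mem hne)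
        omega
      have hcby : (c + b) • y = 0 := by
        rw [hy, smul_smul, mul_comm, ← smul_smul, hcb, smul_zero]
      obtain ⟨N, hN⟩ := ih y hcard hc hb hcby
      exact ⟨N + 1, by rw [pow_succ, ← smul_smul]; exact hN⟩
include ℳ
open Classical in
lemma key : ∀ (k : ℕ) (a : R) (x : M), (DirectSum.decompose 𝒜 a).support.card ≤ k →
    (∃ s : ℕ, 1 ≤ s ∧ a ^ s • x = 0) →
    ∀ d : ℤ, ∃ N : ℕ, (DirectSum.decompose 𝒜 a d : R) ^ N • x = 0 := by
  classical
  intro k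
  induction k with
  | zero =>
    intro a x hcard _ d
    have hs : DirectSum.decompose 𝒜 a = 0 :=
      DFinsupp.support_eq_empty.mp (Finset.card_eq_zero.mp (Nat.le_zero.mp hcard))
    refine ⟨1, ?_⟩
    rw [hs, pow_one]
    show ((0 : 𝒜 d) : R) • x = 0
    rw [ZeroMemClass.coe_zero, zero_smul]
  | succ k ih =>
    intro a x hcard hax d
    obtain ⟨s, hs1, hsx⟩ := hax
    by_cases h0 : (DirectSum.decompose 𝒜 a).support = ∅
    · have hs : DirectSum.decompose 𝒜 a = 0 := DFinsupp.support_eq_empty.mp h0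
      refine ⟨1, ?_⟩
      rw [hs, pow_one]
      show ((0 : 𝒜 d) : R) • x = 0
      rw [ZeroMemClass.coe_zero, zero_smul]
    · have hne : (DirectSum.decompose 𝒜 a).support.Nonempty := Finset.nonempty_iff_ne_empty.2 h0
      set m := (DirectSum.decompose 𝒜 a).support.max' hne with hm
      set c : R := (DirectSum.decompose 𝒜 a m : R) with hcdef
      have hc : c ∈ 𝒜 m := SetLike.coe_mem _
      set b : R := a - c with hbdef
      have ha_bound : ∀ i : ℤ, m < i → (DirectSum.decompose 𝒜 a i : R) = 0 := by
        intro i hi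
        have : i ∉ (DirectSum.decompose 𝒜 a).support := fun hmem =>
          absurd (Finset.le_max' _ _ hmem) (not_le.2 hi)
        rw [DFinsupp.notMem_support_iff.mp this]; rfl
      have hbi : ∀ i : ℤ, i ≠ m → (DirectSum.decompose 𝒜 b i : R) = (DirectSum.decompose 𝒜 a i : R) := by
        intro i hi
        rw [hbdef, ← prM_apply, map_sub, prM_apply, prM_apply,
          DirectSum.decompose_of_mem_ne 𝒜 hc (fun h => hi h.symm), sub_zero]
      have hb : ∀ i : ℤ, m - 1 < i → (DirectSum.decompose 𝒜 b i : R) = 0 := by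
        intro i hi
        rcases eq_or_lt_of_le (show m ≤ i by omega) with h | h
        · rw [hbdef, ← prM_apply, map_sub, prM_apply, prM_apply, ← h,
            DirectSum.decompose_of_mem_same 𝒜 hc, ← hcdef]
          exact sub_self c
        · rw [hbi i (by omega), ha_bound i h]
      -- bound for `a ^ s - c ^ s`
      have hr : ∀ i : ℤ, (s : ℤ) * m - 1 < i →
          (DirectSum.decompose 𝒜 (a ^ s - c ^ s) i : R) = 0 := by
        have hexp : a ^ s - c ^ s =
            ∑ j ∈ Finset.range s, c ^ j * b ^ (s - j) * (s.choose j : R) := by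
          have haeq : a = c + b := by rw [hbdef]; ring
          rw [haeq, add_pow, Finset.sum_range_succ, Nat.sub_self, pow_zero, Nat.choose_self,
            Nat.cast_one, mul_one, mul_one, add_sub_cancel_right]
        intro i hi
        rw [hexp, ← prM_apply, map_sum]
        refine Finset.sum_eq_zero fun j hj => ?_
        have hjs : j < s := Finset.mem_range.mp hj
        rw [prM_apply]
        have t1 := decompose_pow_bound 𝒜 (p := m)
          (fun i' hi' => DirectSum.decompose_of_mem_ne 𝒜 hc (by omega)) j
        have t2 := decompose_pow_bound 𝒜 hb (s - j)
        have t3 := decompose_mul_bound 𝒜 t1 t2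
        have t4 : ∀ i' : ℤ, (0:ℤ) < i' →
            (DirectSum.decompose 𝒜 ((s.choose j : ℕ) : R) i' : R) = 0 := fun i' hi' =>
          DirectSum.decompose_of_mem_ne 𝒜 (SetLike.natCast_mem_graded 𝒜 _) (by omega)
        refine decompose_mul_bound 𝒜 t3 t4 i ?_
        have hcast : ((s - j : ℕ) : ℤ) = (s : ℤ) - j := by
          rw [Nat.cast_sub hjs.le]
        rw [hcast]
        have hid : (j : ℤ) * m + ((s : ℤ) - j) * (m - 1) = (s:ℤ) * m - ((s:ℤ) - j) := by ring
        have hj1 : (1:ℤ) ≤ (s:ℤ) - j := by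
          have : (j:ℤ) < s := by exact_mod_cast hjs
          omega
        omega
      have hcs : c ^ s ∈ 𝒜 ((s : ℤ) * m) := by
        have := SetLike.pow_mem_graded s hc
        rwa [nsmul_eq_mul] at this
      have heq : (c ^ s + (a ^ s - c ^ s)) • x = 0 := by
        rw [show c ^ s + (a ^ s - c ^ s) = a ^ s from by ring]
        exact hsx
      obtain ⟨N1, hN1⟩ := step1 𝒜 ℳ _ x le_rfl hcs hr heq
      have hc1 : c ^ (s * N1) • x = 0 := by rw [pow_mul]; exact hN1
      by_cases hd : d = m
      · exact ⟨s * N1, by rw [hd, ← hcdef]; exact hc1⟩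
      · -- kill `x` by a power of `b`, then use the inductive hypothesis
        set w := s + s * N1 with hw
        have hw1 : 1 ≤ w := by omega
        have hbw : b ^ w • x = 0 := by
          rw [show b = a + (-c) from by rw [hbdef]; ring, add_pow, Finset.sum_smul]
          refine Finset.sum_eq_zero fun i hi => ?_
          have hiw : i < w + 1 := Finset.mem_range.mp hi
          rcases le_or_gt s i with hsi | his
          · have hai : a ^ i = a ^ (i - s) * a ^ s := by
              rw [← pow_add, Nat.sub_add_cancel hsi]
            rw [hai, show a ^ (i - s) * a ^ s * (-c) ^ (w - i) * ((w.choose i : ℕ) : R)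
                = (a ^ (i - s) * (-c) ^ (w - i) * ((w.choose i : ℕ) : R)) * a ^ s from by ring,
              mul_smul, hsx, smul_zero]
          · have hcwi : c ^ (w - i) = c ^ (w - i - s * N1) * c ^ (s * N1) := by
              rw [← pow_add]
              congr 1
              omega
            rw [neg_pow, hcwi, show a ^ i * ((-1 : R) ^ (w - i) * (c ^ (w - i - s * N1) * c ^ (s * N1)))
                * ((w.choose i : ℕ) : R)
                = (a ^ i * (-1 : R) ^ (w - i) * c ^ (w - i - s * N1) * ((w.choose i : ℕ) : R)) * c ^ (s * N1)
                from by ring, mul_smul, hc1, smul_zero]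
        have hcardb : (DirectSum.decompose 𝒜 b).support.card ≤ k := by
          have hsubb : (DirectSum.decompose 𝒜 b).support ⊆
              (DirectSum.decompose 𝒜 a).support.erase m := by
            intro i hi
            have hine : (DirectSum.decompose 𝒜 b i : R) ≠ 0 := fun h =>
              DFinsupp.mem_support_iff.mp hi (ZeroMemClass.coe_eq_zero.mp h)
            have him : i ≠ m := by
              intro h
              exact hine (by rw [h]; exact hb m (by omega))
            refine Finset.mem_erase.2 ⟨him, DFinsupp.mem_support_iff.2 (fun h => ?_)⟩
            rw [hbi i him] at hine
            exact hine (by rw [h]; rfl)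
          have h3 := Finset.card_le_card hsubb
          have h5 : ((DirectSum.decompose 𝒜 a).support.erase m).card <
              (DirectSum.decompose 𝒜 a).support.card :=
            Finset.card_erase_lt_of_mem ((DirectSum.decompose 𝒜 a).support.max'_mem hne)
          omega
        obtain ⟨N, hN⟩ := ih b x hcardb ⟨w, hw1, hbw⟩ d
        rw [hbi d hd] at hN
        exact ⟨N, hN⟩
end Helpers

lemma pow_add_le_pow_add {R : Type*} [CommRing R] (𝔞 J : Ideal R) :
    ∀ t : ℕ, (𝔞 + J) ^ t ≤ 𝔞 ^ t + J := by
  intro t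
  induction t with
  | zero => simp
  | succ t ih =>
    calc (𝔞 + J) ^ (t + 1) = (𝔞 + J) ^ t * (𝔞 + J) := pow_succ _ _
      _ ≤ (𝔞 ^ t + J) * (𝔞 + J) := Ideal.mul_mono ih le_rfl
      _ ≤ 𝔞 ^ (t + 1) + J := by
          rw [Submodule.add_eq_sup, Submodule.add_eq_sup, Submodule.add_eq_sup,
            Ideal.sup_mul, Ideal.mul_sup, Ideal.mul_sup]
          refine sup_le (sup_le ?_ ?_) (sup_le ?_ ?_)
          · rw [← pow_succ]; exact le_sup_left
          · exact le_trans Ideal.mul_le_right le_sup_right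
          · exact le_trans Ideal.mul_le_left le_sup_right
          · exact le_trans Ideal.mul_le_left le_sup_right

section Hom

variable {R : Type*} [CommRing R] (𝒜 : ℤ → AddSubgroup R) [GradedRing 𝒜]

lemma isHomogeneous_pow {I : Ideal R} (hI : Ideal.IsHomogeneous 𝒜 I) :
    ∀ n : ℕ, 1 ≤ n → Ideal.IsHomogeneous 𝒜 (I ^ n) := by
  refine Nat.le_induction ?_ ?_
  · rw [pow_one]; exact hI
  · intro n _ ih
    rw [pow_succ]
    exact Ideal.IsHomogeneous.mul ih hI

end Hom




/-- Let `R` be a Noetherian `ℤ`-graded commutative ring, `I`, `J` homogeneous ideals and `M` a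
graded `R`-module.  Then `Γ_{I,J}(M) = ⋃_{𝔞 ∈ *W̃(I,J)} Γ_𝔞(M)`, where `*W̃(I,J)` is the set of
homogeneous ideals `𝔞` of `R` with `I ^ n ⊆ 𝔞 + J` for some `n ≥ 1`. -/
theorem pairTorsion_eq_iUnion_torsion
    {R M : Type*} [CommRing R] [IsNoetherianRing R] [AddCommGroup M] [Module R M]
    (𝒜 : ℤ → AddSubgroup R) (ℳ : ℤ → AddSubgroup M)
    [GradedRing 𝒜] [DirectSum.Decomposition ℳ] [SetLike.GradedSMul 𝒜 ℳ]
    (I J : Ideal R) (hI : Ideal.IsHomogeneous 𝒜 I) (hJ : Ideal.IsHomogeneous 𝒜 J) :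
    {x : M | ∃ n : ℕ, 1 ≤ n ∧ I ^ n ≤ Ideal.torsionOf R M x + J} =
      ⋃ 𝔞 ∈ {𝔞 : Ideal R | Ideal.IsHomogeneous 𝒜 𝔞 ∧ ∃ n : ℕ, 1 ≤ n ∧ I ^ n ≤ 𝔞 + J},
        {x : M | ∃ t : ℕ, 1 ≤ t ∧ 𝔞 ^ t ≤ Ideal.torsionOf R M x} := by
  classical
  ext x
  simp only [Set.mem_setOf_eq, Set.mem_iUnion, exists_prop]
  constructor
  · rintro ⟨n, hn1, hn⟩
    set S : Set R := {r : R | SetLike.IsHomogeneousElem 𝒜 r ∧ ∃ N : ℕ, r ^ N • x = 0} with hS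
    have hhom : Ideal.IsHomogeneous 𝒜 (Ideal.span S) :=
      Ideal.homogeneous_span 𝒜 S fun r hr => hr.1
    have hrad : Ideal.span S ≤ (Ideal.torsionOf R M x).radical := by
      rw [Ideal.span_le]
      rintro r ⟨-, N, hN⟩
      exact Ideal.mem_radical_iff.mpr ⟨N, by rwa [Ideal.mem_torsionOf_iff]⟩
    obtain ⟨t0, ht0⟩ := Ideal.exists_pow_le_of_le_radical_of_fg hrad (IsNoetherian.noetherian _)
    refine ⟨Ideal.span S, ⟨hhom, n, hn1, ?_⟩, max t0 1, le_max_right _ _,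
      le_trans (Ideal.pow_le_pow_right (le_max_left t0 1)) ht0⟩
    have hInhom : Ideal.IsHomogeneous 𝒜 (I ^ n) := isHomogeneous_pow 𝒜 hI n hn1
    intro g hg
    rw [← DirectSum.sum_support_decompose 𝒜 g]
    refine Ideal.sum_mem _ fun j _ => ?_
    have hgj : (DirectSum.decompose 𝒜 g j : R) ∈ I ^ n := hInhom j hg
    have hmem := hn hgj
    rw [Submodule.add_eq_sup, Submodule.mem_sup] at hmem
    obtain ⟨p, hp, q, hq, hpq⟩ := hmem
    have h1 : (DirectSum.decompose 𝒜 p j : R) + (DirectSum.decompose 𝒜 q j : R)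
        = (DirectSum.decompose 𝒜 g j : R) := by
      rw [← prM_apply, ← prM_apply, ← map_add, hpq, prM_apply]
      exact DirectSum.decompose_of_mem_same 𝒜 (SetLike.coe_mem _)
    have hpx : p • x = 0 := (Ideal.mem_torsionOf_iff x p).mp hp
    obtain ⟨N, hN⟩ := key 𝒜 ℳ (DirectSum.decompose 𝒜 p).support.card p x le_rfl
      ⟨1, le_refl 1, by rwa [pow_one]⟩ j
    have hpj : (DirectSum.decompose 𝒜 p j : R) ∈ Ideal.span S :=
      Ideal.subset_span ⟨⟨j, SetLike.coe_mem _⟩, N, hN⟩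
    have hqj : (DirectSum.decompose 𝒜 q j : R) ∈ J := hJ j hq
    rw [Submodule.add_eq_sup, ← h1]
    exact Submodule.add_mem _ (Ideal.mem_sup_left hpj) (Ideal.mem_sup_right hqj)
  · rintro ⟨𝔞, ⟨_, n, hn1, hn⟩, t, ht1, ht⟩
    refine ⟨n * t, Nat.mul_pos hn1 ht1, ?_⟩
    calc I ^ (n * t) = (I ^ n) ^ t := by rw [pow_mul]
      _ ≤ (𝔞 + J) ^ t := Ideal.pow_right_mono hn t
      _ ≤ 𝔞 ^ t + J := pow_add_le_pow_add 𝔞 J t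
      _ ≤ Ideal.torsionOf R M x + J := by
          rw [Submodule.add_eq_sup, Submodule.add_eq_sup]
          exact sup_le_sup_right ht J
end

section
/- Let R be a commutative ring, let I and J be ideals of R, and let N be an R-module that is J-torsion, i.e. every element of N is annihilated by some power of J. Then the (I,J)-torsion submodule of N coincides with the I-torsion submodule: Γ_{I,J}(N) = Γ_I(N). -/
/-- Let `R` be a commutative ring, `I`, `J` ideals of `R`, and `N` a `J`-torsion `R`-module
(every element is annihilated by some power of `J`).  Then `Γ_{I,J}(N) = Γ_I(N)`. -/
theorem pairTorsion_eq_torsion_of_isTorsion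
    {R N : Type*} [CommRing R] [AddCommGroup N] [Module R N]
    (I J : Ideal R)
    (hN : ∀ x : N, ∃ t : ℕ, 1 ≤ t ∧ J ^ t ≤ Ideal.torsionOf R N x) :
    {x : N | ∃ n : ℕ, 1 ≤ n ∧ I ^ n ≤ Ideal.torsionOf R N x + J} =
      {x : N | ∃ t : ℕ, 1 ≤ t ∧ I ^ t ≤ Ideal.torsionOf R N x} := by
  ext x
  simp only [Set.mem_setOf_eq]
  constructor
  · rintro ⟨n, hn1, hn⟩
    obtain ⟨t, ht1, ht⟩ := hN x
    refine ⟨n * (1 + t), Nat.one_le_iff_ne_zero.2 (by positivity), ?_⟩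
    rw [pow_mul]
    calc (I ^ n) ^ (1 + t) ≤ (Ideal.torsionOf R N x ⊔ J) ^ (1 + t) := by
          gcongr
          exact hn
      _ ≤ (Ideal.torsionOf R N x) ^ 1 ⊔ J ^ t := Ideal.sup_pow_add_le_pow_sup_pow
      _ ≤ Ideal.torsionOf R N x := by
          rw [pow_one]
          exact sup_le le_rfl ht
  · rintro ⟨t, ht1, ht⟩
    exact ⟨t, ht1, ht.trans le_sup_left⟩
end

section
/- Let R be a commutative Noetherian ring, let 𝔞 be an ideal of R, and let x₀ ∈ 𝔞. Suppose A →(·x₀) A →(α) B →(β) C is an exact sequence of R-modules, where the first map is multiplication by x₀ (exactness meaning Im(·x₀) = Ker α and Im α = Ker β). If C is an Artinian R-module and B/𝔞B is an Artinian R-module, then A/𝔞A is an Artinian R-module. -/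
/-- Let `R` be a commutative Noetherian ring, `𝔞` an ideal of `R` and `x₀ ∈ 𝔞`.  Suppose
`A →(·x₀) A →(α) B →(β) C` is an exact sequence of `R`-modules, where the first map is
multiplication by `x₀`.  If `C` and `B/𝔞B` are Artinian `R`-modules, then `A/𝔞A` is an
Artinian `R`-module. -/
theorem isArtinian_quotient_of_exact_smul
    {R A B C : Type*} [CommRing R] [IsNoetherianRing R]
    [AddCommGroup A] [Module R A] [AddCommGroup B] [Module R B]
    [AddCommGroup C] [Module R C]
    (𝔞 : Ideal R) (x₀ : R) (hx₀ : x₀ ∈ 𝔞)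
    (α : A →ₗ[R] B) (β : B →ₗ[R] C)
    (h1 : Function.Exact (LinearMap.lsmul R A x₀) α)
    (h2 : Function.Exact α β)
    (hC : IsArtinian R C)
    (hB : IsArtinian R (B ⧸ (𝔞 • (⊤ : Submodule R B)))) :
    IsArtinian R (A ⧸ (𝔞 • (⊤ : Submodule R A))) := by
  classical
  obtain ⟨s, hs⟩ : 𝔞.FG := IsNoetherian.noetherian 𝔞
  -- the induced map g : A/𝔞A → B/𝔞B
  have hcomap : (𝔞 • (⊤ : Submodule R A)) ≤
      Submodule.comap α (𝔞 • (⊤ : Submodule R B)) := by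
    rw [← Submodule.map_le_iff_le_comap, Submodule.map_smul'']
    exact Submodule.smul_mono le_rfl le_top
  set g : (A ⧸ (𝔞 • (⊤ : Submodule R A))) →ₗ[R] (B ⧸ (𝔞 • (⊤ : Submodule R B))) :=
    Submodule.mapQ _ _ α hcomap with hg
  -- the "linear combination" map L : (s → B) → B
  set L : ((↥s : Type _) → B) →ₗ[R] B :=
    ∑ i : ↥s, (i : R) • LinearMap.proj i with hLdef
  have hLapp : ∀ b : (↥s : Type _) → B, L b = ∑ i : ↥s, (i : R) • b i := by
    intro b
    simp [hLdef, LinearMap.sum_apply]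
  have hmem𝔞 : ∀ i : ↥s, (i : R) ∈ 𝔞 := fun i => by
    rw [← hs]; exact Ideal.subset_span i.2
  -- range L contains 𝔞 • ⊤
  have hL : (𝔞 • (⊤ : Submodule R B)) ≤ LinearMap.range L := by
    rw [← hs]
    refine Submodule.smul_le.2 fun r hr x _ => ?_
    induction hr using Submodule.span_induction with
    | mem y hy =>
        refine ⟨Pi.single (⟨y, hy⟩ : ↥s) x, ?_⟩
        rw [hLapp]
        rw [Finset.sum_eq_single (⟨y, hy⟩ : ↥s)]
        · simp
        · intro j _ hj; rw [Pi.single_eq_of_ne hj, smul_zero]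
        · intro h; exact absurd (Finset.mem_univ _) h
    | zero => simp
    | add y z hy hz ihy ihz =>
        rw [add_smul]; exact Submodule.add_mem _ ihy ihz
    | smul c y hy ihy =>
        rw [smul_eq_mul, mul_smul]; exact Submodule.smul_mem _ _ ihy
  -- the submodule T ⊆ A × (s → B)
  set δ : (A × ((↥s : Type _) → B)) →ₗ[R] B :=
    α.comp (LinearMap.fst R A _) - L.comp (LinearMap.snd R A _) with hδ
  set T := LinearMap.ker δ with hT
  have hTmem : ∀ t : A × ((↥s : Type _) → B), t ∈ T ↔ α t.1 = ∑ i : ↥s, (i : R) • t.2 i := by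
    intro t
    rw [hT, LinearMap.mem_ker, hδ, LinearMap.sub_apply, sub_eq_zero, LinearMap.comp_apply,
      LinearMap.comp_apply, LinearMap.fst_apply, LinearMap.snd_apply, hLapp]
  -- maps out of T
  set φ : T →ₗ[R] ((↥s : Type _) → C) :=
    (LinearMap.pi fun i => β.comp (LinearMap.proj i)).comp
      ((LinearMap.snd R A ((↥s : Type _) → B)).comp T.subtype) with hφ
  set χ : T →ₗ[R] (A ⧸ (𝔞 • (⊤ : Submodule R A))) :=
    (𝔞 • (⊤ : Submodule R A)).mkQ.comp ((LinearMap.fst R A ((↥s : Type _) → B)).comp T.subtype) with hχ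
  have hφapp : ∀ t : T, φ t = fun i => β ((t : A × ((↥s : Type _) → B)).2 i) := fun t => rfl
  have hχapp : ∀ t : T, χ t = Submodule.Quotient.mk (t : A × ((↥s : Type _) → B)).1 := fun t => rfl
  -- ker φ ≤ ker χ
  have hker : LinearMap.ker φ ≤ LinearMap.ker χ := by
    rintro ⟨⟨a, b⟩, ht⟩ hφ0
    have hβb : ∀ i : ↥s, β (b i) = 0 := fun i => congrFun hφ0 i
    have hrange : ∀ i : ↥s, ∃ a' : A, α a' = b i := by
      intro i
      have := (h2 (b i)).1 (hβb i)
      obtain ⟨a', ha'⟩ := this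
      exact ⟨a', ha'⟩
    choose a' ha' using hrange
    have hαa : α (a - ∑ i : ↥s, (i : R) • a' i) = 0 := by
      rw [map_sub, map_sum]
      have : α a = ∑ i : ↥s, (i : R) • b i := (hTmem (a, b)).1 ht
      rw [this]
      simp [ha']
    obtain ⟨a'', ha''⟩ := (h1 _).1 hαa
    have hamem : a ∈ 𝔞 • (⊤ : Submodule R A) := by
      have : a = x₀ • a'' + ∑ i : ↥s, (i : R) • a' i := by
        have := ha''
        simp only [LinearMap.lsmul_apply] at this
        rw [this]; abel
      rw [this]
      refine Submodule.add_mem _ (Submodule.smul_mem_smul hx₀ trivial) ?_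
      exact Submodule.sum_mem _ fun i _ => Submodule.smul_mem_smul (hmem𝔞 i) trivial
    show χ _ = 0
    rw [hχapp]
    exact (Submodule.Quotient.mk_eq_zero _).2 hamem
  -- range χ = ker g
  have hrangeχ : LinearMap.range χ = LinearMap.ker g := by
    apply le_antisymm
    · rintro _ ⟨⟨⟨a, b⟩, ht⟩, rfl⟩
      rw [LinearMap.mem_ker, hχapp]
      have : g (Submodule.Quotient.mk a) = Submodule.Quotient.mk (α a) :=
        rfl
      rw [this, Submodule.Quotient.mk_eq_zero]
      have hαa : α a = ∑ i : ↥s, (i : R) • b i := (hTmem (a, b)).1 ht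
      rw [hαa]
      exact Submodule.sum_mem _ fun i _ => Submodule.smul_mem_smul (hmem𝔞 i) trivial
    · rintro x hx
      obtain ⟨a, rfl⟩ := Submodule.mkQ_surjective _ x
      have : g (Submodule.Quotient.mk a) = Submodule.Quotient.mk (α a) :=
        rfl
      simp only [LinearMap.mem_ker, Submodule.mkQ_apply] at hx
      rw [this, Submodule.Quotient.mk_eq_zero] at hx
      obtain ⟨b, hb⟩ := hL hx
      refine ⟨⟨(a, b), ?_⟩, rfl⟩
      rw [hTmem]
      rw [← hLapp, hb]
  -- T ⧸ ker φ is Artinian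
  haveI hpi : IsArtinian R ((↥s : Type _) → C) := isArtinian_pi'
  haveI hsub : IsArtinian R (LinearMap.range φ) :=
    isArtinian_of_injective (LinearMap.range φ).subtype Subtype.val_injective
  have hart1 : IsArtinian R (T ⧸ LinearMap.ker φ) :=
    isArtinian_of_linearEquiv (φ.quotKerEquivRange).symm
  -- ker g is Artinian
  set χ' : (T ⧸ LinearMap.ker φ) →ₗ[R] (A ⧸ (𝔞 • (⊤ : Submodule R A))) :=
    (LinearMap.ker φ).liftQ χ hker with hχ'
  have hrangeχ' : LinearMap.range χ' = LinearMap.ker g := by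
    rw [hχ', Submodule.range_liftQ, hrangeχ]
  have hart2 : IsArtinian R (LinearMap.ker g) := by
    rw [← hrangeχ']
    exact isArtinian_of_surjective _ χ'.rangeRestrict (LinearMap.surjective_rangeRestrict χ')
  exact isArtinian_of_range_eq_ker (LinearMap.ker g).subtype g (Submodule.range_subtype _)
end
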